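/- Let f : ℝⁿ → ℝ be differentiable and μ-strongly star-convex with constant μ ≥ 0 and global minimizer ω* ∈ ℝⁿ. Then for all λ ∈ [0,1] and all ω ∈ ℝⁿ, setting ω̃ = (1−λ)ω* + λω, it holds that f(ω̃) ≤ (1−λ)f(ω*) + λf(ω) − (λ(1−λ)μ/2)‖ω* − ω‖². -/

import Mathlib

/-!
Put `v = ω - ωs` and `φ t = f (ωs + t • v) - f ωs - (μ / 2) ‖v‖² t²`. Strong star-convexity,
applied at the points of the ray `ωs + t • v`, says exactly `φ t ≤ t φ'(t)`, i.e. that the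
slope `φ t / t` is nondecreasing for `t > 0`. Comparing `t = λ` with `t = 1` gives
`φ λ ≤ λ φ 1`, which is the claimed inequality.
-/

open RealInnerProductSpace Set

theorem HasGradientAt.hasDerivAt_comp_add_smul {E : Type*} [NormedAddCommGroup E]
    [InnerProductSpace ℝ E] [CompleteSpace E] {f : E → ℝ} {g x v : E} {t : ℝ}
    (hf : HasGradientAt f g (x + t • v)) :
    HasDerivAt (fun s : ℝ => f (x + s • v)) ⟪g, v⟫ t := by
  have hline : HasDerivAt (fun s : ℝ => x + s • v) v t := by
    simpa using ((hasDerivAt_id t).smul_const v).const_add x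
  exact hf.hasFDerivAt.comp_hasDerivAt t hline

theorem monotoneOn_div_self_of_le_mul_deriv {φ φ' : ℝ → ℝ}
    (hφ : ∀ t > 0, HasDerivAt φ (φ' t) t) (hle : ∀ t > 0, φ t ≤ t * φ' t) :
    MonotoneOn (fun t => φ t / t) (Ioi 0) := by
  have hquot : ∀ t ∈ Ioi (0 : ℝ),
      HasDerivAt (fun t => φ t / t) ((φ' t * t - φ t * 1) / t ^ 2) t :=
    fun t ht => (hφ t ht).div (hasDerivAt_id t) (ne_of_gt ht)
  refine monotoneOn_of_hasDerivWithinAt_nonneg (convex_Ioi 0)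
    (fun t ht => (hquot t ht).continuousAt.continuousWithinAt)
    (fun t ht => (hquot t (interior_subset ht)).hasDerivWithinAt) fun t ht => ?_
  rw [interior_Ioi] at ht
  have := hle t ht
  apply div_nonneg <;> nlinarith

theorem strong_star_convex_imp_eq8_general {n : ℕ} (f : EuclideanSpace ℝ (Fin n) → ℝ) (μ : ℝ)
    (hdiff : Differentiable ℝ f) (ωs : EuclideanSpace ℝ (Fin n))
    (hssc : ∀ ω : EuclideanSpace ℝ (Fin n),
      f ω + ⟪gradient f ω, ωs - ω⟫ + μ / 2 * ‖ωs - ω‖ ^ 2 ≤ f ωs) :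
    ∀ lam : ℝ, lam ∈ Set.Icc (0 : ℝ) 1 → ∀ ω : EuclideanSpace ℝ (Fin n),
      f ((1 - lam) • ωs + lam • ω)
        ≤ (1 - lam) * f ωs + lam * f ω - lam * (1 - lam) * μ / 2 * ‖ωs - ω‖ ^ 2 := by
  rintro lam ⟨hlam₀, hlam₁⟩ ω
  obtain rfl | hlam := hlam₀.eq_or_lt
  · simp
  set v := ω - ωs
  set c := μ / 2 * ‖v‖ ^ 2
  set φ : ℝ → ℝ := fun t => f (ωs + t • v) - f ωs - c * t ^ 2
  set φ' : ℝ → ℝ := fun t => ⟪gradient f (ωs + t • v), v⟫ - c * (2 * t)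
  have hφ : ∀ t > 0, HasDerivAt φ (φ' t) t := fun t _ =>
    (((hdiff _).hasGradientAt.hasDerivAt_comp_add_smul).sub_const _).sub
      ((hasDerivAt_pow 2 t).const_mul c |>.congr_deriv (by ring))
  have hle : ∀ t > 0, φ t ≤ t * φ' t := by
    intro t ht
    have h := hssc (ωs + t • v)
    rw [show ωs - (ωs + t • v) = (-t) • v by module, real_inner_smul_right, norm_smul,
      Real.norm_eq_abs, abs_neg, abs_of_pos ht] at h
    simp only [φ, φ', c]
    linarith
  have hslope : φ lam / lam ≤ φ 1 / 1 :=
    monotoneOn_div_self_of_le_mul_deriv hφ hle hlam (mem_Ioi.mpr one_pos) hlam₁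
  have hpt : ωs + lam • v = (1 - lam) • ωs + lam • ω := by module
  have hend : ωs + (1 : ℝ) • v = ω := by module
  have hnorm : ‖v‖ = ‖ωs - ω‖ := norm_sub_rev ω ωs
  rw [div_one, div_le_iff₀ hlam] at hslope
  simp only [φ, c, hpt, hend, hnorm] at hslope
  linarith

/-- Lemma 1 (Eq. 8) direction: strong star-convexity (gradient form) implies the
strongly star-convex secant inequality. -/
theorem strong_star_convex_imp_eq8 {n : ℕ} (f : EuclideanSpace ℝ (Fin n) → ℝ) (μ : ℝ)
    (hμ : 0 ≤ μ) (hdiff : Differentiable ℝ f) (ωs : EuclideanSpace ℝ (Fin n))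
    (hmin : ∀ ω, f ωs ≤ f ω)
    (hssc : ∀ ω : EuclideanSpace ℝ (Fin n),
      f ω + ⟪gradient f ω, ωs - ω⟫ + μ / 2 * ‖ωs - ω‖ ^ 2 ≤ f ωs) :
    ∀ lam : ℝ, lam ∈ Set.Icc (0 : ℝ) 1 → ∀ ω : EuclideanSpace ℝ (Fin n),
      f ((1 - lam) • ωs + lam • ω)
        ≤ (1 - lam) * f ωs + lam * f ω - lam * (1 - lam) * μ / 2 * ‖ωs - ω‖ ^ 2 :=
  strong_star_convex_imp_eq8_general f μ hdiff ωs hssc
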